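/- Define the tree encodings T(i) inductively: T(0) is the one-node tree, and for i ≥ 1, T(i) has a new root with the trees T(j) attached as subtrees for exactly those j with bit(j,i) = 1. Then for every h ∈ ℕ and every j < Tower(h), the tree T(j) has height at most h. -/

import Mathlib

/-- Rooted trees: a root with a list of subtrees. -/
inductive RTree where
  | node : List RTree → RTree

/-- bit(j,i) = 0 if ⌊i/2^j⌋ is even, and 1 otherwise. -/
def bit (j i : ℕ) : ℕ := if (i / 2 ^ j) % 2 = 0 then 0 else 1

/-- The tree encoding T(i): T(0) is the one-node tree; T(i) has subtrees
exactly the T(j) for those j with bit(j,i) = 1. -/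
def Tenc (n : ℕ) : RTree :=
  .node (((List.range n).filter (fun j => bit j n = 1)).attach.map
    (fun ⟨j, hj⟩ => Tenc j))
termination_by n
decreasing_by
  simp only [List.mem_filter, List.mem_range] at hj
  exact hj.1

mutual
/-- The height of a rooted tree (the one-node tree has height 0). -/
def height : RTree → ℕ
  | .node cs => heightList cs
def heightList : List RTree → ℕ
  | [] => 0
  | c :: cs => max (height c + 1) (heightList cs)
end

/-- Tower(0) = 1, Tower(h+1) = 2^{Tower(h)}. -/
def Tower : ℕ → ℕ
  | 0 => 1
  | h + 1 => 2 ^ (Tower h)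

/-! A child T(k) of T(j) has bit k of j set, so 2^k ≤ j. Hence if j < Tower (h+1) = 2^{Tower h},
every child index satisfies k < Tower h, and induction on h bounds the height. -/

theorem heightList_le_iff {cs : List RTree} {m : ℕ} :
    heightList cs ≤ m ↔ ∀ c ∈ cs, height c + 1 ≤ m := by
  induction cs with
  | nil => simp [heightList]
  | cons c cs ih => simp [heightList, ih]

theorem height_node_le_succ_iff {cs : List RTree} {n : ℕ} :
    height (.node cs) ≤ n + 1 ↔ ∀ c ∈ cs, height c ≤ n := by
  simp [height, heightList_le_iff]

theorem two_pow_le_of_bit_eq_one {k n : ℕ} (hb : bit k n = 1) : 2 ^ k ≤ n := by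
  by_contra! hlt
  simp [bit, Nat.div_eq_of_lt hlt] at hb

theorem height_Tenc_zero : height (Tenc 0) = 0 := by
  rw [Tenc]
  rfl

theorem height_Tenc_le_succ {n m : ℕ} (hchild : ∀ k, bit k n = 1 → height (Tenc k) ≤ m) :
    height (Tenc n) ≤ m + 1 := by
  rw [Tenc, height_node_le_succ_iff]
  simp only [List.mem_map, List.mem_attach, true_and, Subtype.exists, List.mem_filter,
    List.mem_range, decide_eq_true_eq, forall_exists_index]
  rintro _ k ⟨-, hk⟩ rfl
  exact hchild k hk

/-- For every j < Tower(h), the tree encoding T(j) has height at most h. -/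
theorem height_Tenc_le (h j : ℕ) (hj : j < Tower h) : height (Tenc j) ≤ h := by
  induction h generalizing j with
  | zero =>
    obtain rfl : j = 0 := Nat.lt_one_iff.mp hj
    exact height_Tenc_zero.le
  | succ h ih =>
    refine height_Tenc_le_succ fun k hk => ih k ?_
    have hpow : 2 ^ k < 2 ^ Tower h := (two_pow_le_of_bit_eq_one hk).trans_lt hj
    exact (Nat.pow_lt_pow_iff_right one_lt_two).mp hpow
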